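/- arXiv:2507.19437 — 3 statements merged into one kernel-verified Lean document; each statement's English description precedes it below -/
import Mathlib

section
/- If C → O → Z is a Markov chain of discrete random variables and I(C;O) = I(C;Z), then the posterior of C given (O,Z) equals the posterior of C given Z almost surely: for every (o,z) with positive probability, p(c | o, z) = p(c | z) for all c. -/
open scoped BigOperators Classical

noncomputable section

/-- Shannon entropy of a finitely supported pmf given as a function. -/
def ent {α : Type*} [Fintype α] (p : α → ℝ) : ℝ := ∑ a, Real.negMulLog (p a)

/-- `p` is a probability mass function. -/
def IsJoint {α : Type*} [Fintype α] (p : α → ℝ) : Prop :=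
  (∀ x, 0 ≤ p x) ∧ (∑ x, p x) = 1

variable {C O Z : Type*} [Fintype C] [Fintype O] [Fintype Z]

def mC (p : C × O × Z → ℝ) (c : C) : ℝ := ∑ o, ∑ z, p (c, o, z)
def mO (p : C × O × Z → ℝ) (o : O) : ℝ := ∑ c, ∑ z, p (c, o, z)
def mZ (p : C × O × Z → ℝ) (z : Z) : ℝ := ∑ c, ∑ o, p (c, o, z)
def mCO (p : C × O × Z → ℝ) (x : C × O) : ℝ := ∑ z, p (x.1, x.2, z)
def mOZ (p : C × O × Z → ℝ) (x : O × Z) : ℝ := ∑ c, p (c, x.1, x.2)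
def mCZ (p : C × O × Z → ℝ) (x : C × Z) : ℝ := ∑ o, p (x.1, o, x.2)

/-- Mutual information `I(C;O)`. -/
def miCO (p : C × O × Z → ℝ) : ℝ := ent (mC p) + ent (mO p) - ent (mCO p)
/-- Mutual information `I(C;Z)`. -/
def miCZ (p : C × O × Z → ℝ) : ℝ := ent (mC p) + ent (mZ p) - ent (mCZ p)
/-- Mutual information `I(O;Z)`. -/
def miOZ (p : C × O × Z → ℝ) : ℝ := ent (mO p) + ent (mZ p) - ent (mOZ p)

/-- Conditional mutual information `I(C;O∣Z)`. -/
def cmiCO_Z (p : C × O × Z → ℝ) : ℝ :=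
  ent (mCZ p) + ent (mOZ p) - ent p - ent (mZ p)

/-- Markov chain `C → O → Z`, i.e. `C ⟂ Z ∣ O`. -/
def MarkovCOZ (p : C × O × Z → ℝ) : Prop :=
  ∀ c o z, p (c, o, z) * mO p o = mCO p (c, o) * mOZ p (o, z)

/-- Conditional independence of `C` and `O` given `Z`. -/
def CondIndepCO_Z (p : C × O × Z → ℝ) : Prop :=
  ∀ c o z, p (c, o, z) * mZ p z = mCZ p (c, z) * mOZ p (o, z)

/-- Bayes error of predicting `C` from `O`: `1 - ∑ₒ max_c p(c,o)`. -/
def PeO (p : C × O × Z → ℝ) : ℝ := 1 - ∑ o, ⨆ c, mCO p (c, o)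

/-- Bayes error of predicting `C` from `Z`: `1 - ∑_z max_c p(c,z)`. -/
def PeZ (p : C × O × Z → ℝ) : ℝ := 1 - ∑ z, ⨆ c, mCZ p (c, z)

end


section helpers
variable {C O Z : Type*} [Fintype C] [Fintype O] [Fintype Z]

lemma comm3_1 (f : C → O → Z → ℝ) : ∑ z, ∑ c, ∑ o, f c o z = ∑ c, ∑ o, ∑ z, f c o z := by
  rw [Finset.sum_comm]
  exact Finset.sum_congr rfl fun c _ => Finset.sum_comm

lemma comm3_2 (f : C → O → Z → ℝ) : ∑ o, ∑ z, ∑ c, f c o z = ∑ c, ∑ o, ∑ z, f c o z := by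
  rw [show (∑ o, ∑ z, ∑ c, f c o z) = ∑ o, ∑ c, ∑ z, f c o z from
    Finset.sum_congr rfl fun o _ => Finset.sum_comm, Finset.sum_comm]

lemma ent_expand_p (p : C × O × Z → ℝ) :
    ent p = -∑ c, ∑ o, ∑ z, p (c, o, z) * Real.log (p (c, o, z)) := by
  simp [ent, Real.negMulLog, Fintype.sum_prod_type, neg_mul]

lemma ent_expand_mZ (p : C × O × Z → ℝ) :
    ent (mZ p) = -∑ c, ∑ o, ∑ z, p (c, o, z) * Real.log (mZ p z) := by
  rw [ent, ← comm3_1 (fun c o z => p (c, o, z) * Real.log (mZ p z))]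
  simp [Real.negMulLog, mZ, Finset.sum_mul, neg_mul]

lemma ent_expand_mO (p : C × O × Z → ℝ) :
    ent (mO p) = -∑ c, ∑ o, ∑ z, p (c, o, z) * Real.log (mO p o) := by
  rw [ent, show (∑ c, ∑ o, ∑ z, p (c, o, z) * Real.log (mO p o))
      = ∑ o, ∑ c, ∑ z, p (c, o, z) * Real.log (mO p o) from Finset.sum_comm]
  simp [Real.negMulLog, mO, Finset.sum_mul, neg_mul]

lemma ent_expand_mC (p : C × O × Z → ℝ) :
    ent (mC p) = -∑ c, ∑ o, ∑ z, p (c, o, z) * Real.log (mC p c) := by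
  rw [ent]
  simp [Real.negMulLog, mC, Finset.sum_mul, neg_mul]

lemma ent_expand_mCO (p : C × O × Z → ℝ) :
    ent (mCO p) = -∑ c, ∑ o, ∑ z, p (c, o, z) * Real.log (mCO p (c, o)) := by
  rw [ent, Fintype.sum_prod_type]
  simp [Real.negMulLog, mCO, Finset.sum_mul, neg_mul]

lemma ent_expand_mOZ (p : C × O × Z → ℝ) :
    ent (mOZ p) = -∑ c, ∑ o, ∑ z, p (c, o, z) * Real.log (mOZ p (o, z)) := by
  rw [ent, Fintype.sum_prod_type,
    ← comm3_2 (fun c o z => p (c, o, z) * Real.log (mOZ p (o, z)))]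
  simp [Real.negMulLog, mOZ, Finset.sum_mul, neg_mul]

lemma ent_expand_mCZ (p : C × O × Z → ℝ) :
    ent (mCZ p) = -∑ c, ∑ o, ∑ z, p (c, o, z) * Real.log (mCZ p (c, z)) := by
  rw [ent, Fintype.sum_prod_type, ← Finset.sum_neg_distrib]
  refine Finset.sum_congr rfl fun c _ => ?_
  rw [show (∑ o, ∑ z, p (c, o, z) * Real.log (mCZ p (c, z)))
      = ∑ z, ∑ o, p (c, o, z) * Real.log (mCZ p (c, z)) from Finset.sum_comm]
  simp [Real.negMulLog, mCZ, Finset.sum_mul, neg_mul]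

lemma gibbs_eq {α : Type*} [Fintype α] (a q : α → ℝ) (ha : ∀ x, 0 ≤ a x) (hq : ∀ x, 0 ≤ q x)
    (hsum : ∑ x, a x = ∑ x, q x) (hsupp : ∀ x, 0 < a x → 0 < q x)
    (hzero : ∑ x, a x * Real.log (a x / q x) = 0) : ∀ x, a x = q x := by
  set f : α → ℝ := fun x => a x * Real.log (a x / q x) - (a x - q x) with hf
  have hfnn : ∀ x ∈ Finset.univ, 0 ≤ f x := by
    intro x _
    rcases eq_or_lt_of_le (ha x) with h | h
    · simp [hf, ← h, hq x]
    · have hqx := hsupp x h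
      have hlog : Real.log (q x / a x) ≤ q x / a x - 1 :=
        Real.log_le_sub_one_of_pos (div_pos hqx h)
      have := mul_le_mul_of_nonneg_left hlog (le_of_lt h)
      rw [Real.log_div (ne_of_gt hqx) (ne_of_gt h)] at this
      have h2 : a x * (Real.log (q x) - Real.log (a x)) ≤ q x - a x := by
        calc a x * (Real.log (q x) - Real.log (a x)) ≤ a x * (q x / a x - 1) := this
        _ = q x - a x := by field_simp
      simp only [hf]
      rw [Real.log_div (ne_of_gt h) (ne_of_gt hqx)]
      nlinarith
  have hfsum : ∑ x, f x = 0 := by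
    simp only [hf, Finset.sum_sub_distrib, hzero, hsum]
    ring
  have hf0 := (Finset.sum_eq_zero_iff_of_nonneg hfnn).mp hfsum
  intro x
  have hx := hf0 x (Finset.mem_univ x)
  rcases eq_or_lt_of_le (ha x) with h | h
  · simp only [hf, ← h] at hx ⊢
    simpa using hx.symm
  · have hqx := hsupp x h
    by_contra hne
    have hne' : q x / a x ≠ 1 := by
      intro h1
      exact hne ((div_eq_one_iff_eq (ne_of_gt h)).mp h1).symm
    have hlog : Real.log (q x / a x) < q x / a x - 1 :=
      Real.log_lt_sub_one_of_pos (div_pos hqx h) hne'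
    have := mul_lt_mul_of_pos_left hlog h
    rw [Real.log_div (ne_of_gt hqx) (ne_of_gt h)] at this
    have h2 : a x * (Real.log (q x) - Real.log (a x)) < q x - a x := by
      calc a x * (Real.log (q x) - Real.log (a x)) < a x * (q x / a x - 1) := this
      _ = q x - a x := by field_simp
    simp only [hf] at hx
    rw [Real.log_div (ne_of_gt h) (ne_of_gt hqx)] at hx
    nlinarith

section dom
variable (p : C × O × Z → ℝ)

lemma le_mOZ (hnn : ∀ x, 0 ≤ p x) (c : C) (o : O) (z : Z) : p (c, o, z) ≤ mOZ p (o, z) :=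
  Finset.single_le_sum (fun i _ => hnn (i, o, z)) (Finset.mem_univ c)

lemma le_mCZ (hnn : ∀ x, 0 ≤ p x) (c : C) (o : O) (z : Z) : p (c, o, z) ≤ mCZ p (c, z) :=
  Finset.single_le_sum (fun i _ => hnn (c, i, z)) (Finset.mem_univ o)

lemma le_mCO (hnn : ∀ x, 0 ≤ p x) (c : C) (o : O) (z : Z) : p (c, o, z) ≤ mCO p (c, o) :=
  Finset.single_le_sum (fun i _ => hnn (c, o, i)) (Finset.mem_univ z)

lemma le_mO (hnn : ∀ x, 0 ≤ p x) (c : C) (o : O) (z : Z) : p (c, o, z) ≤ mO p o := by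
  calc p (c, o, z) ≤ ∑ z', p (c, o, z') :=
        Finset.single_le_sum (fun i _ => hnn (c, o, i)) (Finset.mem_univ z)
  _ ≤ mO p o :=
        Finset.single_le_sum (f := fun c' => ∑ z', p (c', o, z'))
          (fun i _ => Finset.sum_nonneg fun j _ => hnn (i, o, j)) (Finset.mem_univ c)

lemma mOZ_le_mZ (hnn : ∀ x, 0 ≤ p x) (o : O) (z : Z) : mOZ p (o, z) ≤ mZ p z := by
  refine Finset.sum_le_sum fun c _ => ?_
  exact Finset.single_le_sum (f := fun o' => p (c, o', z)) (fun i _ => hnn (c, i, z))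
    (Finset.mem_univ o)

end dom

/-- Under the Markov condition, the joint entropy splits. -/
lemma ent_markov (p : C × O × Z → ℝ) (hnn : ∀ x, 0 ≤ p x) (hm : MarkovCOZ p) :
    ent p = ent (mCO p) + ent (mOZ p) - ent (mO p) := by
  have key : ∀ c o z, p (c, o, z) * Real.log (p (c, o, z))
      = p (c, o, z) * (Real.log (mCO p (c, o)) + Real.log (mOZ p (o, z)) - Real.log (mO p o)) := by
    intro c o z
    rcases eq_or_lt_of_le (hnn (c, o, z)) with h | h
    · rw [← h]; ring
    · have hCO : 0 < mCO p (c, o) := lt_of_lt_of_le h (le_mCO p hnn c o z)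
      have hOZ : 0 < mOZ p (o, z) := lt_of_lt_of_le h (le_mOZ p hnn c o z)
      have hO : 0 < mO p o := lt_of_lt_of_le h (le_mO p hnn c o z)
      have hlog : Real.log (p (c, o, z)) + Real.log (mO p o)
          = Real.log (mCO p (c, o)) + Real.log (mOZ p (o, z)) := by
        rw [← Real.log_mul (ne_of_gt h) (ne_of_gt hO),
          ← Real.log_mul (ne_of_gt hCO) (ne_of_gt hOZ), hm c o z]
      have : Real.log (p (c, o, z))
          = Real.log (mCO p (c, o)) + Real.log (mOZ p (o, z)) - Real.log (mO p o) := by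
        linarith
      rw [this]
  rw [ent_expand_p, ent_expand_mCO, ent_expand_mOZ, ent_expand_mO]
  simp only [key, mul_add, mul_sub, Finset.sum_add_distrib, Finset.sum_sub_distrib]
  ring

end helpers

/-- If `C → O → Z` is a Markov chain and `I(C;O) = I(C;Z)`, then the
posterior of `C` given `(O,Z)` equals the posterior of `C` given `Z` almost surely:
for every `(o,z)` with positive probability, `p(c ∣ o,z) = p(c ∣ z)` for all `c`
(stated in cross-multiplied form `p(c,o,z)/p(o,z) = p(c,z)/p(z)`). -/
theorem stmt1 {C O Z : Type*} [Fintype C] [Fintype O] [Fintype Z]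
    (p : C × O × Z → ℝ) (hp : IsJoint p) (hm : MarkovCOZ p)
    (hsuff : miCO p = miCZ p) :
    ∀ c o z, 0 < mOZ p (o, z) →
      p (c, o, z) / mOZ p (o, z) = mCZ p (c, z) / mZ p z := by
  obtain ⟨hnn, hsum1⟩ := hp
  set q : C × O × Z → ℝ := fun x =>
    if mZ p x.2.2 = 0 then 0 else mCZ p (x.1, x.2.2) * mOZ p (x.2.1, x.2.2) / mZ p x.2.2 with hqdef
  have hmZnn : ∀ z, 0 ≤ mZ p z := fun z =>
    Finset.sum_nonneg fun c _ => Finset.sum_nonneg fun o _ => hnn (c, o, z)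
  have hmCZnn : ∀ c z, 0 ≤ mCZ p (c, z) := fun c z => Finset.sum_nonneg fun o _ => hnn (c, o, z)
  have hmOZnn : ∀ o z, 0 ≤ mOZ p (o, z) := fun o z => Finset.sum_nonneg fun c _ => hnn (c, o, z)
  have hqnn : ∀ x, 0 ≤ q x := by
    intro x
    simp only [hqdef]
    split
    · exact le_refl 0
    · exact div_nonneg (mul_nonneg (hmCZnn _ _) (hmOZnn _ _)) (hmZnn _)
  have hsupp : ∀ x, 0 < p x → 0 < q x := by
    rintro ⟨c, o, z⟩ h
    have hz : 0 < mZ p z :=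
      lt_of_lt_of_le (lt_of_lt_of_le h (le_mOZ p hnn c o z)) (mOZ_le_mZ p hnn o z)
    have hCZ : 0 < mCZ p (c, z) := lt_of_lt_of_le h (le_mCZ p hnn c o z)
    have hOZ : 0 < mOZ p (o, z) := lt_of_lt_of_le h (le_mOZ p hnn c o z)
    simp only [hqdef, if_neg (ne_of_gt hz)]
    exact div_pos (mul_pos hCZ hOZ) hz
  have hqz : ∀ z, ∑ c, ∑ o, q (c, o, z) = mZ p z := by
    intro z
    by_cases h : mZ p z = 0
    · simp [hqdef, h]
    · simp only [hqdef, if_neg h]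
      have h1 : ∑ c, mCZ p (c, z) = mZ p z := rfl
      have h2 : ∑ o, mOZ p (o, z) = mZ p z := Finset.sum_comm
      calc ∑ c, ∑ o, mCZ p (c, z) * mOZ p (o, z) / mZ p z
          = (∑ c, mCZ p (c, z)) * (∑ o, mOZ p (o, z) / mZ p z) := by
            rw [Fintype.sum_mul_sum]
            exact Finset.sum_congr rfl fun c _ => Finset.sum_congr rfl fun o _ => by ring
      _ = mZ p z := by
            rw [h1, ← Finset.sum_div, h2]
            field_simp
  have hsumq : ∑ x, q x = ∑ z, mZ p z := by
    rw [Fintype.sum_prod_type]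
    simp only [Fintype.sum_prod_type]
    rw [← comm3_1 (fun c o z => q (c, o, z))]
    exact Finset.sum_congr rfl fun z _ => hqz z
  have hsump : ∑ x, p x = ∑ z, mZ p z := by
    rw [Fintype.sum_prod_type]
    simp only [Fintype.sum_prod_type]
    rw [← comm3_1 (fun c o z => p (c, o, z))]
    rfl
  have hsumpq : ∑ x, p x = ∑ x, q x := by rw [hsump, hsumq]
  have hzero : ∑ x, p x * Real.log (p x / q x) = 0 := by
    have key : ∀ c o z, p (c, o, z) * Real.log (p (c, o, z) / q (c, o, z))
        = p (c, o, z) * (Real.log (p (c, o, z)) + Real.log (mZ p z)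
            - Real.log (mCZ p (c, z)) - Real.log (mOZ p (o, z))) := by
      intro c o z
      rcases eq_or_lt_of_le (hnn (c, o, z)) with h | h
      · rw [← h]; ring
      · have hz : 0 < mZ p z :=
          lt_of_lt_of_le (lt_of_lt_of_le h (le_mOZ p hnn c o z)) (mOZ_le_mZ p hnn o z)
        have hCZ : 0 < mCZ p (c, z) := lt_of_lt_of_le h (le_mCZ p hnn c o z)
        have hOZ : 0 < mOZ p (o, z) := lt_of_lt_of_le h (le_mOZ p hnn c o z)
        have hq : q (c, o, z) = mCZ p (c, z) * mOZ p (o, z) / mZ p z := by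
          simp only [hqdef, if_neg (ne_of_gt hz)]
        rw [hq, div_div_eq_mul_div, Real.log_div (by positivity) (by positivity),
          Real.log_mul (ne_of_gt h) (ne_of_gt hz),
          Real.log_mul (ne_of_gt hCZ) (ne_of_gt hOZ)]
        ring
    rw [Fintype.sum_prod_type]
    simp only [Fintype.sum_prod_type, key, mul_add, mul_sub,
      Finset.sum_add_distrib, Finset.sum_sub_distrib]
    have e1 := ent_expand_p p
    have e2 := ent_expand_mZ p
    have e3 := ent_expand_mCZ p
    have e4 := ent_expand_mOZ p
    have em := ent_markov p hnn hm
    simp only [miCO, miCZ] at hsuff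
    linarith
  have heq := gibbs_eq p q hnn hqnn hsumpq hsupp hzero
  intro c o z hoz
  have hz : 0 < mZ p z := lt_of_lt_of_le hoz (mOZ_le_mZ p hnn o z)
  have h := heq (c, o, z)
  simp only [hqdef, if_neg (ne_of_gt hz)] at h
  rw [h]
  field_simp
end

section
/- Under a Markov chain C → O → Z with observation sufficiency I(C;O) = I(C;Z), the Bayes error of predicting C from Z equals the Bayes error of predicting C from O: P_e(Z) = P_e(O), where P_e(X) = 1 − E_X[max_c p(c | X)]. -/
open scoped BigOperators Classical

section MyAux

open scoped BigOperators Classical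

variable {C O Z : Type*} [Fintype C] [Fintype O] [Fintype Z]

set_option linter.unusedSectionVars false

/-- Gibbs' inequality, equality case. -/
lemma my_gibbs {ι : Type*} [Fintype ι] (q r : ι → ℝ) (hq : ∀ i, 0 ≤ q i) (hr : ∀ i, 0 ≤ r i)
    (hsum : ∑ i, r i ≤ ∑ i, q i) (hpos : ∀ i, 0 < q i → 0 < r i)
    (hzero : ∑ i, q i * Real.log (r i / q i) = 0) : ∀ i, q i = r i := by
  have key : ∀ i, q i * Real.log (r i / q i) ≤ r i - q i := by
    intro i
    rcases (hq i).lt_or_eq with h | h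
    · have hri := hpos i h
      have hlog : Real.log (r i / q i) ≤ r i / q i - 1 :=
        Real.log_le_sub_one_of_pos (div_pos hri h)
      calc q i * Real.log (r i / q i) ≤ q i * (r i / q i - 1) :=
            mul_le_mul_of_nonneg_left hlog h.le
        _ = r i - q i := by field_simp
    · simp [← h, hr i]
  have hterm : ∀ i ∈ (Finset.univ : Finset ι),
      (0:ℝ) ≤ r i - q i - q i * Real.log (r i / q i) := by
    intro i _; linarith [key i]
  have hsum0 : ∑ i, (r i - q i - q i * Real.log (r i / q i)) = 0 := by
    have h1 : ∑ i, (r i - q i - q i * Real.log (r i / q i))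
        = (∑ i, r i) - (∑ i, q i) - ∑ i, q i * Real.log (r i / q i) := by
      rw [Finset.sum_sub_distrib, Finset.sum_sub_distrib]
    have h2 : ∑ i, (r i - q i - q i * Real.log (r i / q i)) ≤ 0 := by
      rw [h1, hzero]; linarith
    have h3 : 0 ≤ ∑ i, (r i - q i - q i * Real.log (r i / q i)) :=
      Finset.sum_nonneg hterm
    linarith
  have heach := (Finset.sum_eq_zero_iff_of_nonneg hterm).mp hsum0
  intro i
  have hi : r i - q i - q i * Real.log (r i / q i) = 0 := heach i (Finset.mem_univ i)
  rcases (hq i).lt_or_eq with h | h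
  · by_contra hne
    have hri := hpos i h
    have hne1 : r i / q i ≠ 1 := by
      intro h1
      exact hne ((div_eq_one_iff_eq (ne_of_gt h)).mp h1).symm
    have hlt : Real.log (r i / q i) < r i / q i - 1 :=
      Real.log_lt_sub_one_of_pos (div_pos hri h) hne1
    have : q i * Real.log (r i / q i) < q i * (r i / q i - 1) :=
      (mul_lt_mul_iff_right₀ h).mpr hlt
    have heq2 : q i * (r i / q i - 1) = r i - q i := by field_simp
    linarith
  · rw [← h] at hi ⊢; simpa using hi.symm

/-- Data-processing for Bayes errors, abstract form. -/
lemma my_bayes_le {C O Z : Type*} [Fintype C] [Fintype O] [Fintype Z] [Nonempty C]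
    (p : C → O → Z → ℝ) (hp : ∀ c o z, 0 ≤ p c o z)
    (hm : ∀ c o z, p c o z * (∑ c', ∑ z', p c' o z') = (∑ z', p c o z') * (∑ c', p c' o z)) :
    ∑ z, ⨆ c, ∑ o, p c o z ≤ ∑ o, ⨆ c, ∑ z, p c o z := by
  set S : O → ℝ := fun o => ⨆ c, ∑ z, p c o z with hS
  set w : O → Z → ℝ := fun o z => if (∑ c', ∑ z', p c' o z') = 0 then 0
    else (∑ c', p c' o z) / (∑ c', ∑ z', p c' o z') with hw
  have hS_ge : ∀ c o, ∑ z, p c o z ≤ S o := fun c o =>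
    le_ciSup (Finite.bddAbove_range fun c' => ∑ z, p c' o z) c
  have hS0 : ∀ o, 0 ≤ S o := fun o =>
    le_trans (Finset.sum_nonneg fun z _ => hp (Classical.arbitrary C) o z)
      (hS_ge (Classical.arbitrary C) o)
  have hkey : ∀ c o z, p c o z ≤ S o * w o z := by
    intro c o z
    by_cases h : (∑ c', ∑ z', p c' o z') = 0
    · have hz : p c o z = 0 := by
        have h1 : ∑ z', p c o z' = 0 := by
          have := (Finset.sum_eq_zero_iff_of_nonneg (fun c' _ =>
            Finset.sum_nonneg fun z' _ => hp c' o z')).mp h c (Finset.mem_univ c)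
          exact this
        exact (Finset.sum_eq_zero_iff_of_nonneg (fun z' _ => hp c o z')).mp h1 z
          (Finset.mem_univ z)
      simp [hz, hw, h]
    · have hpos : 0 < ∑ c', ∑ z', p c' o z' :=
        lt_of_le_of_ne (Finset.sum_nonneg fun c' _ =>
          Finset.sum_nonneg fun z' _ => hp c' o z') (Ne.symm h)
      have hwv : w o z = (∑ c', p c' o z) / (∑ c', ∑ z', p c' o z') := by simp [hw, h]
      have hmoz : 0 ≤ ∑ c', p c' o z := Finset.sum_nonneg fun c' _ => hp c' o z
      have : p c o z = (∑ z', p c o z') * ((∑ c', p c' o z) / (∑ c', ∑ z', p c' o z')) := by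
        field_simp
        linarith [hm c o z]
      rw [this, hwv]
      apply mul_le_mul_of_nonneg_right (hS_ge c o) (div_nonneg hmoz hpos.le)
  have h1 : ∀ z, (⨆ c, ∑ o, p c o z) ≤ ∑ o, S o * w o z := fun z =>
    ciSup_le fun c => Finset.sum_le_sum fun o _ => hkey c o z
  have hwsum : ∀ o, ∑ z, w o z ≤ 1 := by
    intro o
    by_cases h : (∑ c', ∑ z', p c' o z') = 0
    · simp [hw, h]
    · have hpos : 0 < ∑ c', ∑ z', p c' o z' :=
        lt_of_le_of_ne (Finset.sum_nonneg fun c' _ =>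
          Finset.sum_nonneg fun z' _ => hp c' o z') (Ne.symm h)
      have : ∑ z, w o z = (∑ z, ∑ c', p c' o z) / (∑ c', ∑ z', p c' o z') := by
        simp only [hw, if_neg h]
        rw [Finset.sum_div]
      rw [this, Finset.sum_comm]
      rw [div_self (ne_of_gt hpos)]
  calc ∑ z, ⨆ c, ∑ o, p c o z ≤ ∑ z, ∑ o, S o * w o z :=
        Finset.sum_le_sum fun z _ => h1 z
    _ = ∑ o, S o * ∑ z, w o z := by
        rw [Finset.sum_comm]; exact Finset.sum_congr rfl fun o _ => (Finset.mul_sum _ _ _).symm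
    _ ≤ ∑ o, S o * 1 := Finset.sum_le_sum fun o _ =>
        mul_le_mul_of_nonneg_left (hwsum o) (hS0 o)
    _ = ∑ o, S o := by simp

lemma my_negMulLog_sum {ι : Type*} [Fintype ι] (f : ι → ℝ) :
    Real.negMulLog (∑ i, f i) = ∑ i, -(f i * Real.log (∑ j, f j)) := by
  simp [Real.negMulLog, Finset.sum_mul, neg_mul, ← Finset.sum_neg_distrib]

section EntExpand

variable (p : C × O × Z → ℝ)

lemma my_ent_p_eq : ent p = -∑ c, ∑ o, ∑ z, p (c,o,z) * Real.log (p (c,o,z)) := by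
  simp [ent, Fintype.sum_prod_type, Real.negMulLog, Finset.sum_neg_distrib]

lemma my_ent_mCZ_eq : ent (mCZ p) = -∑ c, ∑ o, ∑ z, p (c,o,z) * Real.log (mCZ p (c,z)) := by
  calc ent (mCZ p) = ∑ c, ∑ z, Real.negMulLog (mCZ p (c,z)) := by
        rw [ent, Fintype.sum_prod_type]
    _ = ∑ c, ∑ z, ∑ o, -(p (c,o,z) * Real.log (mCZ p (c,z))) :=
        Finset.sum_congr rfl fun c _ => Finset.sum_congr rfl fun z _ => by
          rw [show mCZ p (c,z) = ∑ o, p (c,o,z) from rfl, my_negMulLog_sum]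
    _ = ∑ c, ∑ o, ∑ z, -(p (c,o,z) * Real.log (mCZ p (c,z))) :=
        Finset.sum_congr rfl fun c _ => Finset.sum_comm
    _ = -∑ c, ∑ o, ∑ z, p (c,o,z) * Real.log (mCZ p (c,z)) := by
        simp [Finset.sum_neg_distrib]

lemma my_ent_mOZ_eq : ent (mOZ p) = -∑ c, ∑ o, ∑ z, p (c,o,z) * Real.log (mOZ p (o,z)) := by
  calc ent (mOZ p) = ∑ o, ∑ z, Real.negMulLog (mOZ p (o,z)) := by
        rw [ent, Fintype.sum_prod_type]
    _ = ∑ o, ∑ z, ∑ c, -(p (c,o,z) * Real.log (mOZ p (o,z))) :=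
        Finset.sum_congr rfl fun o _ => Finset.sum_congr rfl fun z _ => by
          rw [show mOZ p (o,z) = ∑ c, p (c,o,z) from rfl, my_negMulLog_sum]
    _ = ∑ o, ∑ c, ∑ z, -(p (c,o,z) * Real.log (mOZ p (o,z))) :=
        Finset.sum_congr rfl fun o _ => Finset.sum_comm
    _ = ∑ c, ∑ o, ∑ z, -(p (c,o,z) * Real.log (mOZ p (o,z))) := Finset.sum_comm
    _ = -∑ c, ∑ o, ∑ z, p (c,o,z) * Real.log (mOZ p (o,z)) := by
        simp [Finset.sum_neg_distrib]

lemma my_ent_mZ_eq : ent (mZ p) = -∑ c, ∑ o, ∑ z, p (c,o,z) * Real.log (mZ p z) := by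
  calc ent (mZ p) = ∑ z, ∑ c, ∑ o, -(p (c,o,z) * Real.log (mZ p z)) :=
        Finset.sum_congr rfl fun z _ => by
          rw [show mZ p z = ∑ x : C × O, p (x.1, x.2, z) from
            (Fintype.sum_prod_type (fun x : C × O => p (x.1, x.2, z))).symm,
            my_negMulLog_sum, Fintype.sum_prod_type]
    _ = ∑ c, ∑ z, ∑ o, -(p (c,o,z) * Real.log (mZ p z)) := Finset.sum_comm
    _ = ∑ c, ∑ o, ∑ z, -(p (c,o,z) * Real.log (mZ p z)) :=
        Finset.sum_congr rfl fun c _ => Finset.sum_comm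
    _ = -∑ c, ∑ o, ∑ z, p (c,o,z) * Real.log (mZ p z) := by
        simp [Finset.sum_neg_distrib]

lemma my_ent_mO_eq : ent (mO p) = -∑ c, ∑ o, ∑ z, p (c,o,z) * Real.log (mO p o) := by
  calc ent (mO p) = ∑ o, ∑ c, ∑ z, -(p (c,o,z) * Real.log (mO p o)) :=
        Finset.sum_congr rfl fun o _ => by
          rw [show mO p o = ∑ x : C × Z, p (x.1, o, x.2) from
            (Fintype.sum_prod_type (fun x : C × Z => p (x.1, o, x.2))).symm,
            my_negMulLog_sum, Fintype.sum_prod_type]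
    _ = ∑ c, ∑ o, ∑ z, -(p (c,o,z) * Real.log (mO p o)) := Finset.sum_comm
    _ = -∑ c, ∑ o, ∑ z, p (c,o,z) * Real.log (mO p o) := by
        simp [Finset.sum_neg_distrib]

lemma my_ent_mCO_eq : ent (mCO p) = -∑ c, ∑ o, ∑ z, p (c,o,z) * Real.log (mCO p (c,o)) := by
  calc ent (mCO p) = ∑ c, ∑ o, Real.negMulLog (mCO p (c,o)) := by
        rw [ent, Fintype.sum_prod_type]
    _ = ∑ c, ∑ o, ∑ z, -(p (c,o,z) * Real.log (mCO p (c,o))) :=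
        Finset.sum_congr rfl fun c _ => Finset.sum_congr rfl fun o _ => by
          rw [show mCO p (c,o) = ∑ z, p (c,o,z) from rfl, my_negMulLog_sum]
    _ = -∑ c, ∑ o, ∑ z, p (c,o,z) * Real.log (mCO p (c,o)) := by
        simp [Finset.sum_neg_distrib]

lemma my_mCZ_pos (hp0 : ∀ x, 0 ≤ p x) {c o z} (h : 0 < p (c,o,z)) : 0 < mCZ p (c,z) :=
  lt_of_lt_of_le h (Finset.single_le_sum (fun o' _ => hp0 (c,o',z)) (Finset.mem_univ o))

lemma my_mOZ_pos (hp0 : ∀ x, 0 ≤ p x) {c o z} (h : 0 < p (c,o,z)) : 0 < mOZ p (o,z) :=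
  lt_of_lt_of_le h (Finset.single_le_sum (fun c' _ => hp0 (c',o,z)) (Finset.mem_univ c))

lemma my_mZ_pos (hp0 : ∀ x, 0 ≤ p x) {c o z} (h : 0 < p (c,o,z)) : 0 < mZ p z :=
  lt_of_lt_of_le (my_mCZ_pos p hp0 h)
    (Finset.single_le_sum (fun c' _ => Finset.sum_nonneg fun o' _ => hp0 (c',o',z))
      (Finset.mem_univ c))

lemma my_mO_pos (hp0 : ∀ x, 0 ≤ p x) {c o z} (h : 0 < p (c,o,z)) : 0 < mO p o :=
  lt_of_lt_of_le
    (lt_of_lt_of_le h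
      (Finset.single_le_sum (fun z' _ => hp0 (c,o,z')) (Finset.mem_univ z)))
    (Finset.single_le_sum
      (fun c' _ => Finset.sum_nonneg fun z' _ => hp0 (c',o,z')) (Finset.mem_univ c))

lemma my_mCO_pos (hp0 : ∀ x, 0 ≤ p x) {c o z} (h : 0 < p (c,o,z)) : 0 < mCO p (c,o) :=
  lt_of_lt_of_le h (Finset.single_le_sum (fun z' _ => hp0 (c,o,z')) (Finset.mem_univ z))

lemma my_mZ_nonneg (hp0 : ∀ x, 0 ≤ p x) (z : Z) : 0 ≤ mZ p z :=
  Finset.sum_nonneg fun c _ => Finset.sum_nonneg fun o _ => hp0 (c,o,z)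

lemma my_mCZ_nonneg (hp0 : ∀ x, 0 ≤ p x) (c : C) (z : Z) : 0 ≤ mCZ p (c,z) :=
  Finset.sum_nonneg fun o _ => hp0 (c,o,z)

lemma my_mOZ_nonneg (hp0 : ∀ x, 0 ≤ p x) (o : O) (z : Z) : 0 ≤ mOZ p (o,z) :=
  Finset.sum_nonneg fun c _ => hp0 (c,o,z)

lemma my_sum_split (f1 f2 f3 f4 : C → O → Z → ℝ) :
    ∑ c, ∑ o, ∑ z, (f1 c o z + f2 c o z - f3 c o z - f4 c o z)
      = (∑ c, ∑ o, ∑ z, f1 c o z) + (∑ c, ∑ o, ∑ z, f2 c o z)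
        - (∑ c, ∑ o, ∑ z, f3 c o z) - (∑ c, ∑ o, ∑ z, f4 c o z) := by
  simp [Finset.sum_add_distrib, Finset.sum_sub_distrib]

lemma my_cmi_expand (hp0 : ∀ x, 0 ≤ p x) :
    cmiCO_Z p = ∑ c, ∑ o, ∑ z,
      p (c,o,z) * Real.log (p (c,o,z) * mZ p z / (mCZ p (c,z) * mOZ p (o,z))) := by
  have hsplit := my_sum_split
    (fun c o z => p (c,o,z) * Real.log (p (c,o,z)))
    (fun c o z => p (c,o,z) * Real.log (mZ p z))
    (fun c o z => p (c,o,z) * Real.log (mCZ p (c,z)))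
    (fun c o z => p (c,o,z) * Real.log (mOZ p (o,z)))
  have hcongr : ∑ c, ∑ o, ∑ z,
      (p (c,o,z) * Real.log (p (c,o,z)) + p (c,o,z) * Real.log (mZ p z)
        - p (c,o,z) * Real.log (mCZ p (c,z)) - p (c,o,z) * Real.log (mOZ p (o,z)))
      = ∑ c, ∑ o, ∑ z,
      p (c,o,z) * Real.log (p (c,o,z) * mZ p z / (mCZ p (c,z) * mOZ p (o,z))) := by
    refine Finset.sum_congr rfl fun c _ => Finset.sum_congr rfl fun o _ =>
      Finset.sum_congr rfl fun z _ => ?_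
    rcases (hp0 (c,o,z)).lt_or_eq with h | h
    · rw [Real.log_div (mul_ne_zero h.ne' (my_mZ_pos p hp0 h).ne')
        (mul_ne_zero (my_mCZ_pos p hp0 h).ne' (my_mOZ_pos p hp0 h).ne'),
        Real.log_mul h.ne' (my_mZ_pos p hp0 h).ne',
        Real.log_mul (my_mCZ_pos p hp0 h).ne' (my_mOZ_pos p hp0 h).ne']
      ring
    · simp [← h]
  rw [cmiCO_Z, my_ent_p_eq, my_ent_mCZ_eq, my_ent_mOZ_eq, my_ent_mZ_eq]
  rw [hsplit] at hcongr
  linarith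

lemma my_markov_ent (hp0 : ∀ x, 0 ≤ p x) (hm : MarkovCOZ p) :
    ent (mCO p) + ent (mOZ p) - ent p - ent (mO p) = 0 := by
  have hsplit := my_sum_split
    (fun c o z => p (c,o,z) * Real.log (p (c,o,z)))
    (fun c o z => p (c,o,z) * Real.log (mO p o))
    (fun c o z => p (c,o,z) * Real.log (mCO p (c,o)))
    (fun c o z => p (c,o,z) * Real.log (mOZ p (o,z)))
  have hterm : ∑ c, ∑ o, ∑ z,
      (p (c,o,z) * Real.log (p (c,o,z)) + p (c,o,z) * Real.log (mO p o)
        - p (c,o,z) * Real.log (mCO p (c,o)) - p (c,o,z) * Real.log (mOZ p (o,z)))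
      = 0 := by
    refine Finset.sum_eq_zero fun c _ => Finset.sum_eq_zero fun o _ =>
      Finset.sum_eq_zero fun z _ => ?_
    rcases (hp0 (c,o,z)).lt_or_eq with h | h
    · have h1 : Real.log (p (c,o,z) * mO p o) = Real.log (mCO p (c,o) * mOZ p (o,z)) := by
        rw [hm c o z]
      rw [Real.log_mul h.ne' (my_mO_pos p hp0 h).ne',
        Real.log_mul (my_mCO_pos p hp0 h).ne' (my_mOZ_pos p hp0 h).ne'] at h1
      linear_combination p (c,o,z) * h1
    · simp [← h]
  rw [my_ent_p_eq, my_ent_mCO_eq, my_ent_mOZ_eq, my_ent_mO_eq]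
  rw [hsplit] at hterm
  linarith

lemma my_sum_flat (f : C × O × Z → ℝ) :
    ∑ x, f x = ∑ c, ∑ o, ∑ z, f (c,o,z) := by
  rw [Fintype.sum_prod_type]
  exact Finset.sum_congr rfl fun c _ => Fintype.sum_prod_type _

lemma my_sum_p_eq_sum_mZ :
    ∑ x, p x = ∑ z, mZ p z := by
  rw [my_sum_flat]
  calc ∑ c, ∑ o, ∑ z, p (c,o,z) = ∑ c, ∑ z, ∑ o, p (c,o,z) :=
        Finset.sum_congr rfl fun c _ => Finset.sum_comm
    _ = ∑ z, ∑ c, ∑ o, p (c,o,z) := Finset.sum_comm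
    _ = ∑ z, mZ p z := rfl

lemma my_cond_indep (hp : IsJoint p) (hm : MarkovCOZ p) (hsuff : miCO p = miCZ p) :
    CondIndepCO_Z p := by
  have hp0 := hp.1
  have hcmi0 : cmiCO_Z p = 0 := by
    have h1 := my_markov_ent p hp0 hm
    have h2 : ent (mO p) - ent (mCO p) = ent (mZ p) - ent (mCZ p) := by
      have h3 := hsuff
      unfold miCO miCZ at h3
      linarith
    unfold cmiCO_Z
    linarith
  set r : C × O × Z → ℝ := fun x => if mZ p x.2.2 = 0 then 0
    else mCZ p (x.1, x.2.2) * mOZ p (x.2.1, x.2.2) / mZ p x.2.2 with hrdef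
  have hr0 : ∀ x, 0 ≤ r x := by
    intro x
    by_cases h : mZ p x.2.2 = 0
    · simp [hrdef, h]
    · simp only [hrdef, if_neg h]
      exact div_nonneg (mul_nonneg (my_mCZ_nonneg p hp0 _ _) (my_mOZ_nonneg p hp0 _ _))
        (my_mZ_nonneg p hp0 _)
  have hre : ∀ z : Z, ∑ c, ∑ o, r (c,o,z) ≤ mZ p z := by
    intro z
    by_cases h : mZ p z = 0
    · have hz : ∀ c : C, ∀ o : O, r (c,o,z) = 0 := by intro c o; simp [hrdef, h]
      simp [hz, my_mZ_nonneg p hp0 z]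
    · have hcalc : ∑ c, ∑ o, r (c,o,z)
          = (∑ c, mCZ p (c,z)) * (∑ o, mOZ p (o,z)) / mZ p z := by
        rw [Finset.sum_mul_sum, Finset.sum_div]
        refine Finset.sum_congr rfl fun c _ => ?_
        rw [Finset.sum_div]
        refine Finset.sum_congr rfl fun o _ => ?_
        simp [hrdef, h]
      have hc1 : ∑ c, mCZ p (c,z) = mZ p z := rfl
      have hc2 : ∑ o, mOZ p (o,z) = mZ p z := Finset.sum_comm
      rw [hcalc, hc1, hc2, mul_div_assoc, div_self h, mul_one]
  have hrsum : ∑ x, r x ≤ ∑ x, p x := by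
    rw [my_sum_flat r, my_sum_p_eq_sum_mZ]
    calc ∑ c, ∑ o, ∑ z, r (c,o,z) = ∑ c, ∑ z, ∑ o, r (c,o,z) :=
          Finset.sum_congr rfl fun c _ => Finset.sum_comm
      _ = ∑ z, ∑ c, ∑ o, r (c,o,z) := Finset.sum_comm
      _ ≤ ∑ z, mZ p z := Finset.sum_le_sum fun z _ => hre z
  have hrpos : ∀ x, 0 < p x → 0 < r x := by
    rintro ⟨c,o,z⟩ h
    have hz := my_mZ_pos p hp0 h
    simp only [hrdef, if_neg hz.ne']
    exact div_pos (mul_pos (my_mCZ_pos p hp0 h) (my_mOZ_pos p hp0 h)) hz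
  have hzero : ∑ x, p x * Real.log (r x / p x) = 0 := by
    have hexp := my_cmi_expand p hp0
    rw [hcmi0] at hexp
    rw [my_sum_flat]
    have hterm : ∀ c o z, p (c,o,z) * Real.log (r (c,o,z) / p (c,o,z))
        = -(p (c,o,z) * Real.log (p (c,o,z) * mZ p z / (mCZ p (c,z) * mOZ p (o,z)))) := by
      intro c o z
      rcases (hp0 (c,o,z)).lt_or_eq with h | h
      · have hz := my_mZ_pos p hp0 h
        have hcz := my_mCZ_pos p hp0 h
        have hoz := my_mOZ_pos p hp0 h
        have hrv : r (c,o,z) = mCZ p (c,z) * mOZ p (o,z) / mZ p z := by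
          simp [hrdef, hz.ne']
        rw [hrv, show mCZ p (c,z) * mOZ p (o,z) / mZ p z / p (c,o,z)
            = (p (c,o,z) * mZ p z / (mCZ p (c,z) * mOZ p (o,z)))⁻¹ by
          field_simp, Real.log_inv]
        ring
      · simp [← h]
    calc ∑ c, ∑ o, ∑ z, p (c,o,z) * Real.log (r (c,o,z) / p (c,o,z))
        = ∑ c, ∑ o, ∑ z,
          -(p (c,o,z) * Real.log (p (c,o,z) * mZ p z / (mCZ p (c,z) * mOZ p (o,z)))) :=
          Finset.sum_congr rfl fun c _ => Finset.sum_congr rfl fun o _ =>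
            Finset.sum_congr rfl fun z _ => hterm c o z
      _ = -∑ c, ∑ o, ∑ z,
          p (c,o,z) * Real.log (p (c,o,z) * mZ p z / (mCZ p (c,z) * mOZ p (o,z))) := by
          simp [Finset.sum_neg_distrib]
      _ = 0 := by rw [← hexp]; ring
  have heq := my_gibbs p r hp0 hr0 hrsum hrpos hzero
  intro c o z
  by_cases h : mZ p z = 0
  · have hsum0 : ∑ c', mCZ p (c',z) = 0 := by
      rw [show (∑ c', mCZ p (c',z)) = mZ p z from rfl, h]
    have hcz : mCZ p (c,z) = 0 :=
      (Finset.sum_eq_zero_iff_of_nonneg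
        (fun c' _ => my_mCZ_nonneg p hp0 c' z)).mp hsum0 c (Finset.mem_univ c)
    rw [h, hcz]; ring
  · have hx := heq (c,o,z)
    simp only [hrdef, if_neg h] at hx
    rw [hx, div_mul_cancel₀ _ h]

end EntExpand

end MyAux

/-- Under a Markov chain `C → O → Z` with observation sufficiency
`I(C;O) = I(C;Z)`, the Bayes error of predicting `C` from `Z` equals the Bayes
error of predicting `C` from `O`. -/
theorem stmt2 {C O Z : Type*} [Fintype C] [Fintype O] [Fintype Z] [Nonempty C]
    (p : C × O × Z → ℝ) (hp : IsJoint p) (hm : MarkovCOZ p)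
    (hsuff : miCO p = miCZ p) :
    PeZ p = PeO p := by
  have hci := my_cond_indep p hp hm hsuff
  have hp0 := hp.1
  have h1 : ∑ z, ⨆ c, mCZ p (c,z) ≤ ∑ o, ⨆ c, mCO p (c,o) :=
    my_bayes_le (fun c o z => p (c,o,z)) (fun c o z => hp0 (c,o,z))
      (fun c o z => hm c o z)
  have h2 : ∑ o, ⨆ c, mCO p (c,o) ≤ ∑ z, ⨆ c, mCZ p (c,z) :=
    my_bayes_le (fun c z o => p (c,o,z)) (fun c z o => hp0 (c,o,z))
      (fun c z o => hci c o z)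
  unfold PeZ PeO
  rw [le_antisymm h1 h2]
end

section
/- Replay gap bound: let P and Q be two joint distributions of (C, X) on a finite product alphabet 𝒞 × 𝒳 with |𝒞| = N > 2, and suppose ‖P − Q‖_TV ≤ ε/2 with ε/2 ≤ 1 − 1/N. Then |I_P(C;X) − I_Q(C;X)| ≤ (ε/2)·log(N−1) + h₂(ε/2), provided P and Q have the same marginal on C. -/
open scoped BigOperators Classical

noncomputable section

variable {A B : Type*} [Fintype A] [Fintype B]

/-- First marginal of a pair joint. -/
def mA (p : A × B → ℝ) (a : A) : ℝ := ∑ b, p (a, b)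
/-- Second marginal of a pair joint. -/
def mB (p : A × B → ℝ) (b : B) : ℝ := ∑ a, p (a, b)

/-- Mutual information of the two coordinates of a pair joint. -/
def mi2 (p : A × B → ℝ) : ℝ := ent (mA p) + ent (mB p) - ent p

/-- Binary entropy function. -/
def binEnt (x : ℝ) : ℝ := Real.negMulLog x + Real.negMulLog (1 - x)

end

/-- Total variation distance between two pmfs on a finite set. -/
noncomputable def tv {α : Type*} [Fintype α] (P Q : α → ℝ) : ℝ :=
  (1 / 2) * ∑ x, |P x - Q x|

namespace Stmt14Aux

open Real Finset

lemma F_mono {S : ℝ} (hS : 0 ≤ S) :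
    MonotoneOn (fun t => Real.negMulLog t - Real.negMulLog (S + t)) (Set.Ici (0:ℝ)) := by
  have hc : ContinuousOn (fun t => Real.negMulLog t - Real.negMulLog (S + t)) (Set.Ici (0:ℝ)) :=
    (Real.continuous_negMulLog.sub
      (Real.continuous_negMulLog.comp (continuous_const.add continuous_id))).continuousOn
  have hderiv : ∀ t ∈ interior (Set.Ici (0:ℝ)),
      HasDerivAt (fun t => Real.negMulLog t - Real.negMulLog (S + t))
        ((-Real.log t - 1) - (-Real.log (S + t) - 1)) t := by
    intro t ht
    rw [interior_Ici] at ht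
    have ht' : (0:ℝ) < t := ht
    have hSt : S + t ≠ 0 := by positivity
    have h1 := Real.hasDerivAt_negMulLog (ne_of_gt ht')
    have h2 : HasDerivAt (fun t => Real.negMulLog (S + t)) (-Real.log (S + t) - 1) t := by
      have h3 : HasDerivAt (fun u : ℝ => S + u) 1 t := (hasDerivAt_id t).const_add S
      have := (Real.hasDerivAt_negMulLog hSt).comp t h3
      rw [mul_one] at this; exact this
    exact h1.sub h2
  apply monotoneOn_of_deriv_nonneg (convex_Ici 0) hc
  · intro t ht
    exact (hderiv t ht).differentiableAt.differentiableWithinAt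
  · intro t ht
    rw [(hderiv t ht).deriv]
    rw [interior_Ici] at ht
    have ht' : (0:ℝ) < t := ht
    have : Real.log t ≤ Real.log (S + t) := Real.log_le_log ht' (by linarith)
    linarith

lemma F_le {S a b : ℝ} (hS : 0 ≤ S) (ha : 0 ≤ a) (hab : a ≤ b) :
    Real.negMulLog a - Real.negMulLog (S + a) ≤ Real.negMulLog b - Real.negMulLog (S + b) :=
  F_mono hS (Set.mem_Ici.mpr ha) (Set.mem_Ici.mpr (ha.trans hab)) hab

lemma hent_update_le {α : Type*} [Fintype α] [DecidableEq α] (h : α → ℝ)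
    (hh : ∀ c, 0 ≤ h c) (j : α) {a b : ℝ} (ha : 0 ≤ a) (hab : a ≤ b) :
    (∑ c, Real.negMulLog (Function.update h j a c)) -
        Real.negMulLog (∑ c, Function.update h j a c) ≤
      (∑ c, Real.negMulLog (Function.update h j b c)) -
        Real.negMulLog (∑ c, Function.update h j b c) := by
  have hsum : ∀ t : ℝ, (∑ c, Function.update h j t c) = t + ∑ c ∈ univ \ {j}, h c := by
    intro t
    exact Finset.sum_update_of_mem (mem_univ j) h t
  have hsum2 : ∀ t : ℝ, (∑ c, Real.negMulLog (Function.update h j t c))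
      = Real.negMulLog t + ∑ c ∈ univ \ {j}, Real.negMulLog (h c) := by
    intro t
    have : ∀ c, Real.negMulLog (Function.update h j t c)
        = Function.update (fun c => Real.negMulLog (h c)) j (Real.negMulLog t) c := by
      intro c
      exact Function.apply_update (fun _ x => Real.negMulLog x) h j t c
    rw [Finset.sum_congr rfl (fun c _ => this c)]
    exact Finset.sum_update_of_mem (mem_univ j) _ _
  have hS : 0 ≤ ∑ c ∈ univ \ {j}, h c := Finset.sum_nonneg (fun c _ => hh c)
  rw [hsum a, hsum b, hsum2 a, hsum2 b]
  have hF := F_le (S := ∑ c ∈ univ \ {j}, h c) hS ha hab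
  have e1 : a + ∑ c ∈ univ \ {j}, h c = (∑ c ∈ univ \ {j}, h c) + a := add_comm _ _
  have e2 : b + ∑ c ∈ univ \ {j}, h c = (∑ c ∈ univ \ {j}, h c) + b := add_comm _ _
  rw [e1, e2]
  linarith

lemma hent_mono {α : Type*} [Fintype α] (v w : α → ℝ)
    (hv : ∀ c, 0 ≤ v c) (hvw : ∀ c, v c ≤ w c) :
    (∑ c, Real.negMulLog (v c)) - Real.negMulLog (∑ c, v c) ≤
      (∑ c, Real.negMulLog (w c)) - Real.negMulLog (∑ c, w c) := by
  classical
  have key : ∀ s : Finset α,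
      (∑ c, Real.negMulLog (v c)) - Real.negMulLog (∑ c, v c) ≤
      (∑ c, Real.negMulLog (if c ∈ s then w c else v c)) -
        Real.negMulLog (∑ c, if c ∈ s then w c else v c) := by
    intro s
    induction s using Finset.induction_on with
    | empty => simp
    | @insert j s hj ih =>
      set h : α → ℝ := fun c => if c ∈ s then w c else v c with hh
      have hmix : ∀ c, (if c ∈ insert j s then w c else v c) = Function.update h j (w j) c := by
        intro c
        by_cases hc : c = j
        · subst hc; simp [Function.update, hh, hj]
        · simp [Function.update, hc, Finset.mem_insert, hh]
      have hmix2 : ∀ c, h c = Function.update h j (v j) c := by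
        intro c
        by_cases hc : c = j
        · subst hc; simp [Function.update, hh, hj]
        · simp [Function.update, hc]
      have hh0 : ∀ c, 0 ≤ h c := by
        intro c; by_cases hc : c ∈ s <;> simp [hh, hc]
        exacts [(hv c).trans (hvw c), hv c]
      have step := hent_update_le h hh0 j (hv j) (hvw j)
      calc (∑ c, Real.negMulLog (v c)) - Real.negMulLog (∑ c, v c)
          ≤ (∑ c, Real.negMulLog (h c)) - Real.negMulLog (∑ c, h c) := ih
        _ = (∑ c, Real.negMulLog (Function.update h j (v j) c)) -
              Real.negMulLog (∑ c, Function.update h j (v j) c) := by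
            rw [Finset.sum_congr rfl (fun c _ => congrArg Real.negMulLog (hmix2 c)),
              Finset.sum_congr rfl (fun c _ => hmix2 c)]
        _ ≤ (∑ c, Real.negMulLog (Function.update h j (w j) c)) -
              Real.negMulLog (∑ c, Function.update h j (w j) c) := step
        _ = _ := by
            rw [Finset.sum_congr rfl (fun c _ => (congrArg Real.negMulLog (hmix c)).symm),
              Finset.sum_congr rfl (fun c _ => (hmix c).symm)]
  have := key Finset.univ
  simpa using this

lemma sum_nml_le {α : Type*} (T : Finset α) (d : α → ℝ) (hd : ∀ c ∈ T, 0 ≤ d c) :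
    ∑ c ∈ T, Real.negMulLog (d c) ≤
      (∑ c ∈ T, d c) * Real.log (T.card) + Real.negMulLog (∑ c ∈ T, d c) := by
  classical
  set m := ∑ c ∈ T, d c with hm
  have hm0 : 0 ≤ m := Finset.sum_nonneg hd
  have hm0' := hm0
  rcases hm0.eq_or_lt with h0 | hmpos
  · have hz : ∀ c ∈ T, d c = 0 := by
      intro c hc
      exact (Finset.sum_eq_zero_iff_of_nonneg hd).mp h0.symm c hc
    rw [Finset.sum_congr rfl (fun c hc => by rw [hz c hc])]
    simp [← h0]
  · set T' := T.filter (fun c => d c ≠ 0) with hT'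
    have hsub : T' ⊆ T := Finset.filter_subset _ _
    have hdpos : ∀ c ∈ T', 0 < d c := by
      intro c hc
      rw [hT', Finset.mem_filter] at hc
      exact lt_of_le_of_ne (hd c hc.1) (Ne.symm hc.2)
    have hsum' : ∑ c ∈ T', d c = m := Finset.sum_filter_ne_zero T
    have hL : ∑ c ∈ T, Real.negMulLog (d c) = ∑ c ∈ T', Real.negMulLog (d c) := by
      refine (Finset.sum_subset hsub ?_).symm
      intro c hc hnc
      have : d c = 0 := by
        by_contra hne
        exact hnc (Finset.mem_filter.mpr ⟨hc, hne⟩)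
      simp [this]
    have hT'ne : T'.Nonempty := by
      by_contra hne
      rw [Finset.not_nonempty_iff_eq_empty] at hne
      rw [hne, Finset.sum_empty] at hsum'
      exact absurd hsum'.symm (ne_of_gt hmpos)
    have hconc : ConcaveOn ℝ (Set.Ioi (0:ℝ)) Real.log := strictConcaveOn_log_Ioi.concaveOn
    have happ := hconc.le_map_sum (t := T') (w := fun c => d c / m) (p := fun c => m / d c)
      (fun c hc => div_nonneg (hd c (hsub hc)) hm0')
      (by rw [← Finset.sum_div, hsum', div_self (ne_of_gt hmpos)])
      (fun c hc => Set.mem_Ioi.mpr (div_pos hmpos (hdpos c hc)))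
    have hpt : ∑ c ∈ T', (d c / m) • (m / d c) = (T'.card : ℝ) := by
      have hone : ∀ c ∈ T', (d c / m) • (m / d c) = (1:ℝ) := by
        intro c hc
        have h1 : d c ≠ 0 := (hdpos c hc).ne'
        have h2 : m ≠ 0 := hmpos.ne'
        rw [smul_eq_mul]
        field_simp
      rw [Finset.sum_congr rfl hone, Finset.sum_const, nsmul_eq_mul, mul_one]
    have hlog : ∑ c ∈ T', (d c / m) • Real.log (m / d c) ≤ Real.log (T'.card : ℝ) := by
      rw [← hpt]; exact happ
    have hexp : ∑ c ∈ T', Real.negMulLog (d c) =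
        Real.negMulLog m + m * ∑ c ∈ T', (d c / m) • Real.log (m / d c) := by
      rw [Finset.mul_sum]
      have : ∀ c ∈ T', m * ((d c / m) • Real.log (m / d c))
          = d c * Real.log m - d c * Real.log (d c) := by
        intro c hc
        rw [smul_eq_mul, Real.log_div (ne_of_gt hmpos) (ne_of_gt (hdpos c hc))]
        field_simp
      rw [Finset.sum_congr rfl this, Finset.sum_sub_distrib, ← Finset.sum_mul, hsum']
      simp only [Real.negMulLog, neg_mul, Finset.sum_neg_distrib]
      ring
    have hcard : Real.log (T'.card : ℝ) ≤ Real.log (T.card : ℝ) := by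
      apply Real.log_le_log
      · exact_mod_cast Finset.card_pos.mpr hT'ne
      · exact_mod_cast Finset.card_le_card hsub
    rw [hL, hexp]
    have := mul_le_mul_of_nonneg_left (hlog.trans hcard) hm0'
    linarith

lemma binEnt_concave : ConcaveOn ℝ (Set.Icc (0:ℝ) 1) binEnt := by
  have h1 : ConcaveOn ℝ (Set.Icc (0:ℝ) 1) Real.negMulLog :=
    Real.concaveOn_negMulLog.subset (fun x hx => hx.1) (convex_Icc 0 1)
  have h2 : ConcaveOn ℝ (Set.Icc (0:ℝ) 1) (fun x => Real.negMulLog (1 - x)) := by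
    refine ⟨convex_Icc 0 1, ?_⟩
    intro x hx y hy a b ha hb hab
    have hx' : (1:ℝ) - x ∈ Set.Ici (0:ℝ) := by
      simp only [Set.mem_Ici]; linarith [hx.2]
    have hy' : (1:ℝ) - y ∈ Set.Ici (0:ℝ) := by
      simp only [Set.mem_Ici]; linarith [hy.2]
    have key := Real.concaveOn_negMulLog.2 hx' hy' ha hb hab
    have heq : (1:ℝ) - (a • x + b • y) = a • (1 - x) + b • (1 - y) := by
      simp only [smul_eq_mul]; nlinarith [hab]
    show a • Real.negMulLog (1 - x) + b • Real.negMulLog (1 - y)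
        ≤ Real.negMulLog (1 - (a • x + b • y))
    rw [heq]
    exact key
  exact h1.add h2

lemma nml_scale (s σ : ℝ) :
    Real.negMulLog (s * σ) + Real.negMulLog (s - s * σ) - Real.negMulLog s
      = s * binEnt σ := by
  have h1 : s - s * σ = s * (1 - σ) := by ring
  rw [h1, Real.negMulLog_mul, Real.negMulLog_mul, binEnt]
  ring

lemma g_monotoneOn (n : ℝ) (hn : 2 ≤ n) :
    MonotoneOn (fun t => t * Real.log (n - 1) + binEnt t) (Set.Icc (0:ℝ) (1 - 1/n)) := by
  have hn0 : (0:ℝ) < n := by linarith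
  have hc : ContinuousOn (fun t => t * Real.log (n - 1) + binEnt t)
      (Set.Icc (0:ℝ) (1 - 1/n)) := by
    apply Continuous.continuousOn
    unfold binEnt
    exact (continuous_id.mul continuous_const).add
      (Real.continuous_negMulLog.add
        (Real.continuous_negMulLog.comp (continuous_const.sub continuous_id)))
  have hderiv : ∀ t ∈ interior (Set.Icc (0:ℝ) (1 - 1/n)),
      HasDerivAt (fun t => t * Real.log (n - 1) + binEnt t)
        (Real.log (n - 1) + ((-Real.log t - 1) + (Real.log (1 - t) + 1))) t := by
    intro t ht
    rw [interior_Icc] at ht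
    obtain ⟨ht0, ht1⟩ := ht
    have h1t : (0:ℝ) < 1 - t := by
      have : (0:ℝ) < 1/n := by positivity
      linarith
    have d1 : HasDerivAt (fun t : ℝ => t * Real.log (n - 1)) (Real.log (n - 1)) t := by
      simpa using (hasDerivAt_id t).mul_const (Real.log (n - 1))
    have d2 : HasDerivAt Real.negMulLog (-Real.log t - 1) t :=
      Real.hasDerivAt_negMulLog (ne_of_gt ht0)
    have d3 : HasDerivAt (fun t : ℝ => Real.negMulLog (1 - t)) (Real.log (1 - t) + 1) t := by
      have h4 : HasDerivAt (fun u : ℝ => 1 - u) (-1) t := (hasDerivAt_id t).const_sub 1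
      have h5 := (Real.hasDerivAt_negMulLog (ne_of_gt h1t)).comp t h4
      have h6 : (-Real.log (1 - t) - 1) * (-1) = Real.log (1 - t) + 1 := by ring
      rw [h6] at h5
      exact h5
    exact d1.add (d2.add d3)
  apply monotoneOn_of_deriv_nonneg (convex_Icc _ _) hc
  · intro t ht
    exact (hderiv t ht).differentiableAt.differentiableWithinAt
  · intro t ht
    rw [(hderiv t ht).deriv]
    rw [interior_Icc] at ht
    obtain ⟨ht0, ht1⟩ := ht
    have h1t : (0:ℝ) < 1 - t := by
      have : (0:ℝ) < 1/n := by positivity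
      linarith
    have hn1 : (0:ℝ) < n - 1 := by linarith
    have hmul : Real.log (n - 1) + Real.log (1 - t) = Real.log ((n - 1) * (1 - t)) :=
      (Real.log_mul (ne_of_gt hn1) (ne_of_gt h1t)).symm
    have hle : t ≤ (n - 1) * (1 - t) := by
      have h3 : (n - 1) * (1 - t) > (n - 1) * (1/n) := by
        apply mul_lt_mul_of_pos_left _ hn1
        linarith
      have h4 : (n - 1) * (1/n) = 1 - 1/n := by
        field_simp
      nlinarith
    have := Real.log_le_log ht0 hle
    linarith [hmul, this]

lemma hent_nonneg {α : Type*} [Fintype α] (v : α → ℝ) (hv : ∀ c, 0 ≤ v c) :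
    0 ≤ (∑ c, Real.negMulLog (v c)) - Real.negMulLog (∑ c, v c) := by
  have hS : 0 ≤ ∑ c, v c := Finset.sum_nonneg fun c _ => hv c
  rcases hS.eq_or_lt with h0 | hS'
  · have hz : ∀ c ∈ Finset.univ, v c = 0 :=
      (Finset.sum_eq_zero_iff_of_nonneg (fun c _ => hv c)).mp h0.symm
    have h1 : (∑ c, Real.negMulLog (v c)) = 0 := by
      apply Finset.sum_eq_zero
      intro c hc
      rw [hz c hc, Real.negMulLog_zero]
    rw [h1, ← h0]
    simp
  · have key : ∀ c, v c * Real.log (v c) ≤ v c * Real.log (∑ c, v c) := by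
      intro c
      rcases (hv c).eq_or_lt with h | h
      · rw [← h]; simp
      · apply mul_le_mul_of_nonneg_left _ (hv c)
        apply Real.log_le_log h
        exact Finset.single_le_sum (fun c _ => hv c) (mem_univ c)
    have h1 : ∑ c, v c * Real.log (v c) ≤ ∑ c, v c * Real.log (∑ c, v c) :=
      Finset.sum_le_sum fun c _ => key c
    rw [← Finset.sum_mul] at h1
    simp only [Real.negMulLog, neg_mul, Finset.sum_neg_distrib]
    linarith

lemma g_tstar (n : ℝ) (hn : 2 ≤ n) :
    (1 - 1/n) * Real.log (n - 1) + binEnt (1 - 1/n) = Real.log n := by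
  have hn0 : (0:ℝ) < n := by linarith
  have hn1 : (0:ℝ) < n - 1 := by linarith
  have h1 : (1:ℝ) - (1 - 1/n) = 1/n := by ring
  rw [binEnt, h1, Real.negMulLog, Real.negMulLog]
  have e1 : Real.log (1 - 1/n) = Real.log (n - 1) - Real.log n := by
    rw [show (1:ℝ) - 1/n = (n-1)/n by field_simp, Real.log_div (ne_of_gt hn1) (ne_of_gt hn0)]
  have e2 : Real.log (1/n) = - Real.log n := by rw [one_div, Real.log_inv]
  rw [e1, e2]
  field_simp
  ring

/-- Per-letter core inequality. -/
lemma perx {α : Type*} [Fintype α] (hN : 2 ≤ Fintype.card α) (v w : α → ℝ)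
    (hv0 : ∀ c, 0 ≤ v c) (hvw : ∀ c, v c ≤ w c) :
    ((∑ c, Real.negMulLog (w c)) - Real.negMulLog (∑ c, w c))
      - ((∑ c, Real.negMulLog (v c)) - Real.negMulLog (∑ c, v c))
    ≤ (∑ c, w c) *
      ((if (∑ c, w c) = 0 then 0 else
          min ((∑ c, (w c - v c)) / (∑ c, w c)) (1 - 1/(Fintype.card α : ℝ)))
        * Real.log ((Fintype.card α : ℝ) - 1)
        + binEnt (if (∑ c, w c) = 0 then 0 else
          min ((∑ c, (w c - v c)) / (∑ c, w c)) (1 - 1/(Fintype.card α : ℝ)))) := by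
  classical
  have hn2 : (2:ℝ) ≤ (Fintype.card α : ℝ) := by exact_mod_cast hN
  set n : ℝ := (Fintype.card α : ℝ) with hndef
  have hn0 : (0:ℝ) < n := by linarith
  have hn1 : (0:ℝ) < n - 1 := by linarith
  have hw0 : ∀ c, 0 ≤ w c := fun c => (hv0 c).trans (hvw c)
  set s : ℝ := ∑ c, w c with hsdef
  set δ : ℝ := ∑ c, (w c - v c) with hδdef
  have hs0 : 0 ≤ s := Finset.sum_nonneg fun c _ => hw0 c
  have hδ0 : 0 ≤ δ := Finset.sum_nonneg fun c _ => sub_nonneg.mpr (hvw c)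
  have hvsum : (∑ c, v c) = s - δ := by
    rw [hδdef, Finset.sum_sub_distrib, ← hsdef]; ring
  have hEv := hent_nonneg v hv0
  by_cases hs : s = 0
  · rw [if_pos hs, hs]
    have hw00 : ∀ c ∈ Finset.univ, w c = 0 :=
      (Finset.sum_eq_zero_iff_of_nonneg (fun c _ => hw0 c)).mp hs
    have h1 : (∑ c, Real.negMulLog (w c)) = 0 :=
      Finset.sum_eq_zero fun c hc => by rw [hw00 c hc, Real.negMulLog_zero]
    rw [h1]
    simp only [Real.negMulLog_zero, zero_mul]
    linarith
  · rw [if_neg hs]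
    have hs' : 0 < s := lt_of_le_of_ne hs0 (Ne.symm hs)
    by_cases hcase : δ/s ≤ 1 - 1/n
    · -- main case : Gibbs argument
      rw [min_eq_left hcase]
      have h1 : s * (δ/s) = δ := by field_simp
      have hRHS : s * (δ/s * Real.log (n-1) + binEnt (δ/s))
          = δ * Real.log (n-1) + (Real.negMulLog δ + Real.negMulLog (s - δ)
            - Real.negMulLog s) := by
        have e : s * (δ/s * Real.log (n-1)) = δ * Real.log (n-1) := by field_simp
        rw [mul_add, e, ← nml_scale s (δ/s), h1]
      rw [hRHS]
      rcases hδ0.eq_or_lt with hδz | hδpos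
      · have hwv : ∀ c ∈ Finset.univ, w c - v c = 0 :=
          (Finset.sum_eq_zero_iff_of_nonneg (fun c _ => sub_nonneg.mpr (hvw c))).mp hδz.symm
        have hwv' : ∀ c, w c = v c := fun c => by
          have := hwv c (mem_univ c); linarith
        have e1 : (∑ c, Real.negMulLog (w c)) = ∑ c, Real.negMulLog (v c) :=
          Finset.sum_congr rfl fun c _ => by rw [hwv' c]
        rw [e1, hvsum, ← hδz]
        simp
      · -- δ > 0
        set cc : ℝ := δ / (n - 1) with hccdef
        have hcc0 : 0 < cc := div_pos hδpos hn1
        set r : α → ℝ := fun a => max (v a) cc with hrdef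
        have hr0 : ∀ a, 0 < r a := fun a => lt_of_lt_of_le hcc0 (le_max_right _ _)
        have hrv : ∀ a, v a ≤ r a := fun a => le_max_left _ _
        have hrc : ∀ a, cc ≤ r a := fun a => le_max_right _ _
        have hsumr : (∑ a, r a) ≤ s := by
          by_cases hex : ∃ a₀, cc ≤ v a₀
          · obtain ⟨a₀, ha₀⟩ := hex
            have hsplit : (∑ a, r a) = r a₀ + ∑ a ∈ Finset.univ.erase a₀, r a :=
              (Finset.add_sum_erase _ _ (mem_univ a₀)).symm
            have he1 : r a₀ = v a₀ := max_eq_left ha₀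
            have he2 : ∀ a ∈ Finset.univ.erase a₀, r a ≤ v a + cc := by
              intro a _
              exact max_le (by linarith [hcc0.le]) (by linarith [hv0 a])
            have hcard : ((Finset.univ.erase a₀).card : ℝ) = n - 1 := by
              rw [Finset.card_erase_of_mem (mem_univ a₀), Finset.card_univ]
              have h1' : 1 ≤ Fintype.card α := by omega
              push_cast [Nat.cast_sub h1']
              ring
            have he3 : (∑ a ∈ Finset.univ.erase a₀, r a)
                ≤ (∑ a ∈ Finset.univ.erase a₀, v a) + (n - 1) * cc := by
              calc (∑ a ∈ Finset.univ.erase a₀, r a)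
                  ≤ ∑ a ∈ Finset.univ.erase a₀, (v a + cc) := Finset.sum_le_sum he2
                _ = (∑ a ∈ Finset.univ.erase a₀, v a)
                    + ((Finset.univ.erase a₀).card : ℝ) * cc := by
                    rw [Finset.sum_add_distrib, Finset.sum_const, nsmul_eq_mul]
                _ = (∑ a ∈ Finset.univ.erase a₀, v a) + (n - 1) * cc := by rw [hcard]
            have he4 : (n - 1) * cc = δ := by
              rw [hccdef]; field_simp
            have he5 : v a₀ + ∑ a ∈ Finset.univ.erase a₀, v a = ∑ a, v a :=
              Finset.add_sum_erase _ _ (mem_univ a₀)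
            rw [hvsum] at he5
            linarith
          · push_neg at hex
            have he1 : ∀ a, r a = cc := fun a => max_eq_right (le_of_lt (hex a))
            have he2 : (∑ a, r a) = n * cc := by
              rw [Finset.sum_congr rfl fun a _ => he1 a, Finset.sum_const, Finset.card_univ,
                nsmul_eq_mul]
            have h3 : δ ≤ (1 - 1/n) * s := by
              rw [div_le_iff₀ hs'] at hcase; exact hcase
            have h4 : n * δ ≤ s * (n - 1) := by
              have h5 := mul_le_mul_of_nonneg_left h3 hn0.le
              have h6 : n * ((1 - 1/n) * s) = s * (n-1) := by field_simp
              linarith [h5, h6]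
            rw [he2, hccdef]
            calc n * (δ / (n-1)) = n * δ / (n-1) := by ring
              _ ≤ s := by rw [div_le_iff₀ hn1]; linarith
        have gibbs : (∑ a, w a * Real.log (r a / w a)) ≤ (∑ a, r a) - s := by
          have hper : ∀ a ∈ Finset.univ, w a * Real.log (r a / w a) ≤ r a - w a := by
            intro a _
            rcases (hw0 a).eq_or_lt with h | h
            · rw [← h]; simpa using (hr0 a).le
            · have hlog : Real.log (r a / w a) ≤ r a / w a - 1 :=
                Real.log_le_sub_one_of_pos (div_pos (hr0 a) h)
              have h2 := mul_le_mul_of_nonneg_left hlog (le_of_lt h)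
              have he : w a * (r a / w a - 1) = r a - w a := by field_simp
              linarith [h2, he]
          calc (∑ a, w a * Real.log (r a / w a)) ≤ ∑ a, (r a - w a) := Finset.sum_le_sum hper
            _ = (∑ a, r a) - s := by rw [Finset.sum_sub_distrib, ← hsdef]
        have stepA : (∑ a, Real.negMulLog (w a))
            ≤ (∑ a, w a * Real.log (r a / w a)) + ∑ a, (- (w a * Real.log (r a))) := by
          rw [← Finset.sum_add_distrib]
          apply Finset.sum_le_sum
          intro a _
          rcases (hw0 a).eq_or_lt with h | h
          · rw [← h]; simp
          · apply le_of_eq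
            rw [Real.log_div (ne_of_gt (hr0 a)) (ne_of_gt h), Real.negMulLog]
            ring
        have stepB : (∑ a, (- (w a * Real.log (r a))))
            = (∑ a, (- (v a * Real.log (r a)))) + ∑ a, (- ((w a - v a) * Real.log (r a))) := by
          rw [← Finset.sum_add_distrib]
          apply Finset.sum_congr rfl
          intro a _; ring
        have stepC : (∑ a, (- (v a * Real.log (r a)))) ≤ ∑ a, Real.negMulLog (v a) := by
          apply Finset.sum_le_sum
          intro a _
          rcases (hv0 a).eq_or_lt with h | h
          · rw [← h]; simp
          · have hlog : Real.log (v a) ≤ Real.log (r a) := Real.log_le_log h (hrv a)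
            have h2 := mul_le_mul_of_nonneg_left hlog (hv0 a)
            simp only [Real.negMulLog, neg_mul]
            linarith
        have stepD : (∑ a, (- ((w a - v a) * Real.log (r a))))
            ≤ δ * Real.log (n-1) + Real.negMulLog δ := by
          have hlogcc : Real.log cc = Real.log δ - Real.log (n-1) := by
            rw [hccdef]
            exact Real.log_div (ne_of_gt hδpos) (ne_of_gt hn1)
          have per : ∀ a ∈ Finset.univ, - ((w a - v a) * Real.log (r a))
              ≤ (w a - v a) * (Real.log (n-1) - Real.log δ) := by
            intro a _
            have h1' : Real.log cc ≤ Real.log (r a) := Real.log_le_log hcc0 (hrc a)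
            have h2 : 0 ≤ w a - v a := sub_nonneg.mpr (hvw a)
            have h3 : - Real.log (r a) ≤ Real.log (n-1) - Real.log δ := by linarith
            have h4 := mul_le_mul_of_nonneg_left h3 h2
            rw [mul_neg] at h4
            linarith
          calc (∑ a, (- ((w a - v a) * Real.log (r a))))
              ≤ ∑ a, (w a - v a) * (Real.log (n-1) - Real.log δ) := Finset.sum_le_sum per
            _ = δ * (Real.log (n-1) - Real.log δ) := by rw [← Finset.sum_mul, ← hδdef]
            _ = δ * Real.log (n-1) + Real.negMulLog δ := by rw [Real.negMulLog]; ring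
        have h0 : (∑ a, w a * Real.log (r a / w a)) ≤ 0 := le_trans gibbs (by linarith)
        rw [hvsum]
        linarith [stepA, stepB, stepC, stepD, h0]
    · push_neg at hcase
      rw [min_eq_right (le_of_lt hcase)]
      rw [g_tstar n hn2]
      have h1 := sum_nml_le Finset.univ w (fun c _ => hw0 c)
      have hcardu : (((Finset.univ : Finset α)).card : ℝ) = n := by
        rw [Finset.card_univ]
      rw [← hsdef] at h1
      rw [hcardu] at h1
      linarith [h1, hEv]

lemma gg_concave (n : ℝ) :
    ConcaveOn ℝ (Set.Icc (0:ℝ) 1) (fun t => t * Real.log (n - 1) + binEnt t) := by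
  apply ConcaveOn.add _ binEnt_concave
  refine ⟨convex_Icc 0 1, ?_⟩
  intro x _ y _ a b _ _ _
  apply le_of_eq
  simp only [smul_eq_mul]
  ring

lemma aggregate {X : Type*} [Fintype X] {n : ℝ} (hn2 : 2 ≤ n) (s σ m : X → ℝ)
    (hs0 : ∀ x, 0 ≤ s x) (hsum : (∑ x, s x) = 1)
    (hσ : ∀ x, σ x ∈ Set.Icc (0:ℝ) 1)
    (hm0 : ∀ x, 0 ≤ m x) (hsσ : ∀ x, s x * σ x ≤ m x)
    {ε2 : ℝ} (hM : (∑ x, m x) ≤ ε2) (hε2 : ε2 ≤ 1 - 1/n) :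
    (∑ x, s x * (σ x * Real.log (n - 1) + binEnt (σ x)))
      ≤ ε2 * Real.log (n - 1) + binEnt ε2 := by
  have happ := (gg_concave n).le_map_sum (t := Finset.univ) (w := s) (p := σ)
    (fun x _ => hs0 x) hsum (fun x _ => hσ x)
  simp only [smul_eq_mul] at happ
  have hA0 : 0 ≤ ∑ x, s x * σ x :=
    Finset.sum_nonneg fun x _ => mul_nonneg (hs0 x) (hσ x).1
  have hAm : (∑ x, s x * σ x) ≤ ∑ x, m x := Finset.sum_le_sum fun x _ => hsσ x
  have hmono := g_monotoneOn n hn2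
  have h0ε2 : 0 ≤ ε2 := le_trans (le_trans hA0 hAm) hM
  have h3 := hmono (Set.mem_Icc.mpr ⟨hA0, le_trans (hAm.trans hM) hε2⟩)
    (Set.mem_Icc.mpr ⟨h0ε2, hε2⟩) (hAm.trans hM)
  exact le_trans happ h3

lemma tv_nonneg {α : Type*} [Fintype α] (P Q : α → ℝ) : 0 ≤ tv P Q :=
  mul_nonneg (by norm_num) (Finset.sum_nonneg fun x _ => abs_nonneg _)

lemma tv_comm {α : Type*} [Fintype α] (P Q : α → ℝ) : tv Q P = tv P Q := by
  unfold tv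
  congr 1
  exact Finset.sum_congr rfl fun p _ => abs_sub_comm _ _

lemma oneSided {𝒞 X : Type*} [Fintype 𝒞] [Fintype X]
    (P Q : 𝒞 × X → ℝ) (hP : IsJoint P) (hQ : IsJoint Q)
    (hN : 2 < Fintype.card 𝒞) {ε : ℝ}
    (hTV : tv P Q ≤ ε / 2)
    (hhalf : ε / 2 ≤ 1 - 1 / (Fintype.card 𝒞 : ℝ))
    (hmarg : ∀ c, mA P c = mA Q c) :
    mi2 P - mi2 Q ≤ (ε / 2) * Real.log ((Fintype.card 𝒞 : ℝ) - 1) + binEnt (ε / 2) := by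
  classical
  have hNle : 2 ≤ Fintype.card 𝒞 := by omega
  have hn2 : (2:ℝ) ≤ (Fintype.card 𝒞 : ℝ) := by exact_mod_cast hNle
  have hn0 : (0:ℝ) < (Fintype.card 𝒞 : ℝ) := by linarith
  -- entropy reindexing
  have entP : ent P = ∑ x, ∑ c, Real.negMulLog (P (c, x)) := by
    rw [ent, Fintype.sum_prod_type]
    exact Finset.sum_comm
  have entQ : ent Q = ∑ x, ∑ c, Real.negMulLog (Q (c, x)) := by
    rw [ent, Fintype.sum_prod_type]
    exact Finset.sum_comm
  have entmA : ent (mA P) = ent (mA Q) := by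
    unfold ent
    exact Finset.sum_congr rfl fun c _ => by rw [hmarg c]
  have hsplit : mi2 P - mi2 Q
      = ∑ x, (((∑ c, Real.negMulLog (Q (c, x))) - Real.negMulLog (mB Q x))
          - ((∑ c, Real.negMulLog (P (c, x))) - Real.negMulLog (mB P x))) := by
    rw [Finset.sum_sub_distrib, Finset.sum_sub_distrib, Finset.sum_sub_distrib]
    rw [← entQ, ← entP]
    have e1 : (∑ x, Real.negMulLog (mB Q x)) = ent (mB Q) := rfl
    have e2 : (∑ x, Real.negMulLog (mB P x)) = ent (mB P) := rfl
    rw [e1, e2]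
    unfold mi2
    linarith [entmA]
  -- per-x bound
  have bound1 : mi2 P - mi2 Q ≤ ∑ x, ((∑ c, Q (c,x)) *
      ((if (∑ c, Q (c,x)) = 0 then 0 else
          min ((∑ c, (Q (c,x) - min (P (c,x)) (Q (c,x)))) / (∑ c, Q (c,x)))
            (1 - 1/(Fintype.card 𝒞 : ℝ)))
        * Real.log ((Fintype.card 𝒞 : ℝ) - 1)
        + binEnt (if (∑ c, Q (c,x)) = 0 then 0 else
          min ((∑ c, (Q (c,x) - min (P (c,x)) (Q (c,x)))) / (∑ c, Q (c,x)))
            (1 - 1/(Fintype.card 𝒞 : ℝ))))) := by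
    rw [hsplit]
    apply Finset.sum_le_sum
    intro x _
    have hmono := hent_mono (fun c => min (P (c,x)) (Q (c,x))) (fun c => P (c,x))
      (fun c => le_min (hP.1 _) (hQ.1 _)) (fun c => min_le_left _ _)
    have hpx := perx hNle (fun c => min (P (c,x)) (Q (c,x))) (fun c => Q (c,x))
      (fun c => le_min (hP.1 _) (hQ.1 _)) (fun c => min_le_right _ _)
    have e1 : mB Q x = ∑ c, Q (c, x) := rfl
    have e2 : mB P x = ∑ c, P (c, x) := rfl
    rw [e1, e2]
    linarith [hmono, hpx]
  -- total variation bound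
  have htv : (∑ x, ∑ c, (Q (c, x) - min (P (c, x)) (Q (c, x)))) = tv P Q := by
    have hpt : ∀ (p : 𝒞 × X), Q p - min (P p) (Q p) = (|P p - Q p| + (Q p - P p)) / 2 := by
      intro p
      rcases le_total (P p) (Q p) with h | h
      · rw [min_eq_left h, abs_of_nonpos (by linarith)]; ring
      · rw [min_eq_right h, abs_of_nonneg (by linarith)]; ring
    have e : (∑ p : 𝒞 × X, (Q p - min (P p) (Q p)))
        = ∑ x, ∑ c, (Q (c, x) - min (P (c, x)) (Q (c, x))) := by
      rw [Fintype.sum_prod_type]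
      exact Finset.sum_comm
    rw [← e, Finset.sum_congr rfl fun p _ => hpt p]
    have e2 : (∑ p : 𝒞 × X, (|P p - Q p| + (Q p - P p)) / 2)
        = ((∑ p : 𝒞 × X, |P p - Q p|) + ((∑ p : 𝒞 × X, Q p) - ∑ p : 𝒞 × X, P p)) / 2 := by
      rw [← Finset.sum_div, Finset.sum_add_distrib, Finset.sum_sub_distrib]
    rw [e2, hP.2, hQ.2, tv]
    ring
  -- aggregation
  have hsum1 : (∑ x, ∑ c, Q (c, x)) = 1 := by
    have e : (∑ p : 𝒞 × X, Q p) = ∑ x, ∑ c, Q (c, x) := by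
      rw [Fintype.sum_prod_type]
      exact Finset.sum_comm
    rw [← e, hQ.2]
  have hts : (0:ℝ) ≤ 1 - 1/(Fintype.card 𝒞 : ℝ) := by
    have h1 : 1/(Fintype.card 𝒞 : ℝ) ≤ 1 := by
      rw [div_le_one hn0]; linarith
    linarith
  have hagg := aggregate (n := (Fintype.card 𝒞 : ℝ)) hn2
    (fun x => ∑ c, Q (c,x))
    (fun x => if (∑ c, Q (c,x)) = 0 then 0 else
        min ((∑ c, (Q (c,x) - min (P (c,x)) (Q (c,x)))) / (∑ c, Q (c,x)))
          (1 - 1/(Fintype.card 𝒞 : ℝ)))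
    (fun x => ∑ c, (Q (c,x) - min (P (c,x)) (Q (c,x))))
    (fun x => Finset.sum_nonneg fun c _ => hQ.1 _)
    hsum1
    (by
      intro x
      by_cases h : (∑ c, Q (c,x)) = 0
      · simp [h]
      · have hs' : 0 < ∑ c, Q (c,x) :=
          lt_of_le_of_ne (Finset.sum_nonneg fun c _ => hQ.1 _) (Ne.symm h)
        have hδ0 : 0 ≤ ∑ c, (Q (c,x) - min (P (c,x)) (Q (c,x))) :=
          Finset.sum_nonneg fun c _ => sub_nonneg.mpr (min_le_right _ _)
        simp only [if_neg h, Set.mem_Icc]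
        constructor
        · exact le_min (div_nonneg hδ0 hs'.le) hts
        · have h1 : min ((∑ c, (Q (c,x) - min (P (c,x)) (Q (c,x)))) / (∑ c, Q (c,x)))
              (1 - 1/(Fintype.card 𝒞 : ℝ)) ≤ 1 - 1/(Fintype.card 𝒞 : ℝ) := min_le_right _ _
          have h2 : (0:ℝ) < 1/(Fintype.card 𝒞 : ℝ) := by positivity
          linarith)
    (fun x => Finset.sum_nonneg fun c _ => sub_nonneg.mpr (min_le_right _ _))
    (by
      intro x
      by_cases h : (∑ c, Q (c,x)) = 0
      · simp only [if_pos h, h, zero_mul]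
        exact Finset.sum_nonneg fun c _ => sub_nonneg.mpr (min_le_right _ _)
      · have hs0' : 0 ≤ ∑ c, Q (c,x) := Finset.sum_nonneg fun c _ => hQ.1 _
        have hs' : 0 < ∑ c, Q (c,x) := lt_of_le_of_ne hs0' (Ne.symm h)
        simp only [if_neg h]
        have h1 : min ((∑ c, (Q (c,x) - min (P (c,x)) (Q (c,x)))) / (∑ c, Q (c,x)))
            (1 - 1/(Fintype.card 𝒞 : ℝ))
            ≤ (∑ c, (Q (c,x) - min (P (c,x)) (Q (c,x)))) / (∑ c, Q (c,x)) := min_le_left _ _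
        calc (∑ c, Q (c,x)) * min ((∑ c, (Q (c,x) - min (P (c,x)) (Q (c,x)))) / (∑ c, Q (c,x)))
              (1 - 1/(Fintype.card 𝒞 : ℝ))
            ≤ (∑ c, Q (c,x)) * ((∑ c, (Q (c,x) - min (P (c,x)) (Q (c,x)))) / (∑ c, Q (c,x))) :=
              mul_le_mul_of_nonneg_left h1 hs0'
          _ = ∑ c, (Q (c,x) - min (P (c,x)) (Q (c,x))) := by field_simp)
    (by rw [htv]; exact hTV)
    hhalf
  exact le_trans bound1 hagg

end Stmt14Aux

/-- Replay gap bound. If two joints `P, Q` of `(C,X)` on a finite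
product alphabet with `|𝒞| = N > 2` satisfy `‖P − Q‖_TV ≤ ε/2 ≤ 1 − 1/N` and have
the same marginal on `C`, then `|I_P(C;X) − I_Q(C;X)| ≤ (ε/2)·log(N−1) + h₂(ε/2)`. -/
theorem stmt14 {𝒞 X : Type*} [Fintype 𝒞] [Fintype X]
    (P Q : 𝒞 × X → ℝ) (hP : IsJoint P) (hQ : IsJoint Q)
    (hN : 2 < Fintype.card 𝒞)
    (ε : ℝ) (hε : 0 < ε)
    (hTV : tv P Q ≤ ε / 2)
    (hhalf : ε / 2 ≤ 1 - 1 / (Fintype.card 𝒞 : ℝ))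
    (hmarg : ∀ c, mA P c = mA Q c) :
    |mi2 P - mi2 Q| ≤
      (ε / 2) * Real.log ((Fintype.card 𝒞 : ℝ) - 1) + binEnt (ε / 2) := by
  rw [abs_sub_le_iff]
  constructor
  · exact Stmt14Aux.oneSided P Q hP hQ hN hTV hhalf hmarg
  · apply Stmt14Aux.oneSided Q P hQ hP hN ?_ hhalf (fun c => (hmarg c).symm)
    rw [Stmt14Aux.tv_comm]
    exact hTV
end
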